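/- arXiv:1704.00743 — 3 statements merged into one kernel-verified Lean document; each statement's English description precedes it below -/
import Mathlib

section
/- Let X : ℝ × ℝ → ℝ^d be a smooth map with X(t,s+1) = X(t,s) + N for a fixed N ∈ ℤ^d, let v : ℝ × ℝ^d → ℝ^d be smooth with ∂_t X(t,s) = v(t, X(t,s)) for all (t,s), and let β : ℝ^d → ℝ^d be a smooth ℤ^d-periodic vector field. Then for every t, d/dt ∫₀¹ β(X(t,s)) · ∂_s X(t,s) ds = ∫₀¹ (∂_j β_i)(X(t,s)) ( v^j(t,X(t,s)) ∂_s X^i(t,s) − ∂_s X^j(t,s) v^i(t,X(t,s)) ) ds (summation over repeated indices i,j ∈ {1,…,d}). In other words, the distribution-valued field B(t) defined by the loop satisfies the induction equation ∂_t B + ∇·(B⊗v − v⊗B) = 0 in the sense of distributions. -/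
/-!
Pull back the `1`-form `ω x = β x ⬝ᵥ ·` along `Y (t, s) = X t s`. By the symmetry of the second
derivative of `Y`, `∂ₜ (ω(Y) ∂ₛY) = dω(Y)(∂ₜY, ∂ₛY) + ∂ₛ (ω(Y) ∂ₜY)`, where
`dω(Y)(a, b) = Dω(Y) a b - Dω(Y) b a`. After differentiating under the integral sign, the exact
term contributes only the boundary value `ω(Y) ∂ₜY` at `s = 1` minus that at `s = 0`, which
vanishes because `Y (·, 1) - Y (·, 0)` is the constant `N` and `β` is `ℤ^d`-periodic. It remains
to substitute `∂ₜY = v` and to expand `dω` in coordinates.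
-/

open MeasureTheory intervalIntegral

noncomputable section

/-- Spatial partial derivative `∂_j f` of a scalar function on `ℝ^d`. -/
def pd {d : ℕ} (j : Fin d) (f : (Fin d → ℝ) → ℝ) (x : Fin d → ℝ) : ℝ :=
  fderiv ℝ f x (Pi.single j 1)

section Slices

variable {F : Type*} [NormedAddCommGroup F] [NormedSpace ℝ F] {f : ℝ × ℝ → F}

theorem DifferentiableAt.hasDerivAt_comp_prodMk_left {t s : ℝ}
    (hf : DifferentiableAt ℝ f (t, s)) :
    HasDerivAt (fun τ => f (τ, s)) (fderiv ℝ f (t, s) (1, 0)) t :=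
  (hf.hasFDerivAt.comp t (hasFDerivAt_prodMk_left (𝕜 := ℝ) t s)).hasDerivAt

theorem DifferentiableAt.hasDerivAt_comp_prodMk_right {t s : ℝ}
    (hf : DifferentiableAt ℝ f (t, s)) :
    HasDerivAt (fun σ => f (t, σ)) (fderiv ℝ f (t, s) (0, 1)) s :=
  (hf.hasFDerivAt.comp s (hasFDerivAt_prodMk_right (𝕜 := ℝ) t s)).hasDerivAt

theorem hasDerivAt_intervalIntegral_of_contDiff (hf : ContDiff ℝ 1 f) (a b t : ℝ) :
    HasDerivAt (fun τ => ∫ s in a..b, f (τ, s)) (∫ s in a..b, fderiv ℝ f (t, s) (1, 0)) t := by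
  have hf' : Continuous fun p => fderiv ℝ f p (1, 0) :=
    (hf.continuous_fderiv one_ne_zero).clm_apply continuous_const
  have hslice {g : ℝ × ℝ → F} (hg : Continuous g) (τ : ℝ) : Continuous fun s => g (τ, s) :=
    hg.comp (Continuous.prodMk_right τ)
  obtain ⟨C, hC⟩ := ((isCompact_closedBall t 1).prod isCompact_uIcc).exists_bound_of_continuousOn
    hf'.continuousOn
  refine (hasDerivAt_integral_of_dominated_loc_of_deriv_le (bound := fun _ => C)
    (F := fun τ s => f (τ, s)) (F' := fun τ s => fderiv ℝ f (τ, s) (1, 0))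
    (Metric.closedBall_mem_nhds t one_pos) ?_ ((hslice hf.continuous t).intervalIntegrable a b)
    (hslice hf' t).aestronglyMeasurable ?_ intervalIntegrable_const ?_).2
  · exact .of_forall fun τ => (hslice hf.continuous τ).aestronglyMeasurable
  · exact .of_forall fun s hs τ hτ => hC (τ, s) ⟨hτ, Set.uIoc_subset_uIcc hs⟩
  · exact .of_forall fun s _ τ _ => (hf.differentiable one_ne_zero _).hasDerivAt_comp_prodMk_left

end Slices

section OneForms

variable {P E : Type*} [NormedAddCommGroup P] [NormedSpace ℝ P] [NormedAddCommGroup E]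
  [NormedSpace ℝ E] {ω : E → E →L[ℝ] ℝ}

theorem contDiff_oneForm_apply_fderiv {Y : P → E} (hY : ContDiff ℝ 2 Y)
    (hω : ContDiff ℝ 1 ω) (v : P) :
    ContDiff ℝ 1 fun q => ω (Y q) (fderiv ℝ Y q v) :=
  (hω.comp (hY.of_le one_le_two)).clm_apply ((hY.fderiv_right le_rfl).clm_apply contDiff_const)

theorem fderiv_oneForm_apply_fderiv {Y : P → E} (hY : ContDiff ℝ 2 Y)
    (hω : ContDiff ℝ 1 ω) (p v w : P) :
    fderiv ℝ (fun q => ω (Y q) (fderiv ℝ Y q v)) p w =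
      fderiv ℝ ω (Y p) (fderiv ℝ Y p w) (fderiv ℝ Y p v) +
        ω (Y p) (fderiv ℝ (fderiv ℝ Y) p w v) := by
  have hωY : HasFDerivAt (fun q => ω (Y q)) ((fderiv ℝ ω (Y p)).comp (fderiv ℝ Y p)) p :=
    (hω.differentiable one_ne_zero _).hasFDerivAt.comp p
      (hY.differentiable two_ne_zero p).hasFDerivAt
  have hDY := ((hY.fderiv_right le_rfl).differentiable one_ne_zero p).hasFDerivAt.clm_apply
    (hasFDerivAt_const v p)
  rw [(hωY.clm_apply hDY).fderiv]
  simp [add_comm]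

theorem fderiv_oneForm_apply_fderiv_sub {Y : P → E} (hY : ContDiff ℝ 2 Y)
    (hω : ContDiff ℝ 1 ω) (p v w : P) :
    fderiv ℝ (fun q => ω (Y q) (fderiv ℝ Y q v)) p w -
        fderiv ℝ (fun q => ω (Y q) (fderiv ℝ Y q w)) p v =
      fderiv ℝ ω (Y p) (fderiv ℝ Y p w) (fderiv ℝ Y p v) -
        fderiv ℝ ω (Y p) (fderiv ℝ Y p v) (fderiv ℝ Y p w) := by
  rw [fderiv_oneForm_apply_fderiv hY hω, fderiv_oneForm_apply_fderiv hY hω,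
    (hY.contDiffAt.isSymmSndFDerivAt (by simp)).eq w v]
  abel

theorem hasDerivAt_integral_oneForm_apply_fderiv {Y : ℝ × ℝ → E} (hY : ContDiff ℝ 2 Y)
    (hω : ContDiff ℝ 1 ω) (a b t : ℝ)
    (hbdry : ω (Y (t, b)) (fderiv ℝ Y (t, b) (1, 0)) = ω (Y (t, a)) (fderiv ℝ Y (t, a) (1, 0))) :
    HasDerivAt (fun τ => ∫ s in a..b, ω (Y (τ, s)) (fderiv ℝ Y (τ, s) (0, 1)))
      (∫ s in a..b, fderiv ℝ ω (Y (t, s)) (fderiv ℝ Y (t, s) (1, 0)) (fderiv ℝ Y (t, s) (0, 1)) -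
        fderiv ℝ ω (Y (t, s)) (fderiv ℝ Y (t, s) (0, 1)) (fderiv ℝ Y (t, s) (1, 0))) t := by
  set fₛ := fun q => ω (Y q) (fderiv ℝ Y q (0, 1))
  set fₜ := fun q => ω (Y q) (fderiv ℝ Y q (1, 0))
  have hfₛ : ContDiff ℝ 1 fₛ := contDiff_oneForm_apply_fderiv hY hω _
  have hfₜ : ContDiff ℝ 1 fₜ := contDiff_oneForm_apply_fderiv hY hω _
  have hint {f : ℝ × ℝ → ℝ} (hf : ContDiff ℝ 1 f) (v : ℝ × ℝ) :
      IntervalIntegrable (fun s => fderiv ℝ f (t, s) v) volume a b :=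
    (((hf.continuous_fderiv one_ne_zero).clm_apply continuous_const).comp
      (Continuous.prodMk_right t)).intervalIntegrable a b
  have hexact : ∫ s in a..b, fderiv ℝ fₜ (t, s) (0, 1) = 0 := by
    rw [integral_eq_sub_of_hasDerivAt
      (fun s _ => (hfₜ.differentiable one_ne_zero _).hasDerivAt_comp_prodMk_right)
      (hint hfₜ _), sub_eq_zero]
    exact hbdry
  have hcurl : ∀ s, fderiv ℝ fₛ (t, s) (1, 0) - fderiv ℝ fₜ (t, s) (0, 1) = _ :=
    fun s => fderiv_oneForm_apply_fderiv_sub hY hω (t, s) (0, 1) (1, 0)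
  refine (hasDerivAt_intervalIntegral_of_contDiff hfₛ a b t).congr_deriv ?_
  calc ∫ s in a..b, fderiv ℝ fₛ (t, s) (1, 0)
      = ∫ s in a..b, fderiv ℝ fₛ (t, s) (1, 0) - fderiv ℝ fₜ (t, s) (0, 1) := by
        rw [integral_sub (hint hfₛ _) (hint hfₜ _), hexact, sub_zero]
    _ = _ := integral_congr fun s _ => hcurl s

end OneForms

section Coordinates

variable {d : ℕ}

def dotProductCLM (ι : Type*) [Fintype ι] : (ι → ℝ) →L[ℝ] (ι → ℝ) →L[ℝ] ℝ :=
  ∑ i, (ContinuousLinearMap.proj i).smulRight (ContinuousLinearMap.proj i)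

@[simp]
theorem dotProductCLM_apply {ι : Type*} [Fintype ι] (a w : ι → ℝ) :
    dotProductCLM ι a w = ∑ i, a i * w i := by
  simp [dotProductCLM]

theorem fderiv_apply_eq_sum_pd {β : (Fin d → ℝ) → Fin d → ℝ} {x : Fin d → ℝ}
    (hβ : DifferentiableAt ℝ β x) (u : Fin d → ℝ) (i : Fin d) :
    fderiv ℝ β x u i = ∑ j, pd j (fun y => β y i) x * u j := by
  simp only [pd, fderiv_apply hβ]
  conv_lhs => rw [show u = ∑ j, u j • Pi.single j 1 by ext; simp [Pi.single_apply]]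
  simp [mul_comm]

theorem fderiv_dotProductCLM_comp_sub {β : (Fin d → ℝ) → Fin d → ℝ} {x : Fin d → ℝ}
    (hβ : DifferentiableAt ℝ β x) (u w : Fin d → ℝ) :
    fderiv ℝ (fun y => dotProductCLM (Fin d) (β y)) x u w -
        fderiv ℝ (fun y => dotProductCLM (Fin d) (β y)) x w u =
      ∑ i, ∑ j, pd j (fun y => β y i) x * (u j * w i - w j * u i) := by
  have hω : HasFDerivAt (fun y => dotProductCLM (Fin d) (β y))
      ((dotProductCLM (Fin d)).comp (fderiv ℝ β x)) x :=
    (dotProductCLM (Fin d)).hasFDerivAt.comp x hβ.hasFDerivAt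
  rw [hω.fderiv]
  simp only [ContinuousLinearMap.comp_apply, dotProductCLM_apply, fderiv_apply_eq_sum_pd hβ,
    ← Finset.sum_sub_distrib, Finset.sum_mul, mul_sub, mul_assoc]

end Coordinates

theorem stmt_2_general (d : ℕ) (X : ℝ → ℝ → Fin d → ℝ) (N : Fin d → ℤ)
    (v : ℝ → (Fin d → ℝ) → Fin d → ℝ) (β : (Fin d → ℝ) → Fin d → ℝ)
    (hX : ContDiff ℝ (⊤ : ℕ∞) (fun p : ℝ × ℝ => X p.1 p.2))
    (hβ : ContDiff ℝ (⊤ : ℕ∞) β)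
    (hper : ∀ t s : ℝ, X t (s + 1) = X t s + fun i => (N i : ℝ))
    (hβper : ∀ (x : Fin d → ℝ) (k : Fin d → ℤ), β (x + fun i => (k i : ℝ)) = β x)
    (hflow : ∀ (t s : ℝ) (i : Fin d), deriv (fun τ => X τ s i) t = v t (X t s) i) :
    ∀ t : ℝ, HasDerivAt
      (fun τ => ∫ s in (0:ℝ)..1, ∑ i, β (X τ s) i * deriv (fun σ => X τ σ i) s)
      (∫ s in (0:ℝ)..1, ∑ i, ∑ j, pd j (fun x => β x i) (X t s) *
        (v t (X t s) j * deriv (fun σ => X t σ i) s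
          - deriv (fun σ => X t σ j) s * v t (X t s) i)) t := by
  intro t
  set Y : ℝ × ℝ → Fin d → ℝ := fun p => X p.1 p.2
  have hY : ContDiff ℝ 2 Y := hX.of_le (WithTop.coe_le_coe.2 le_top)
  have hYdiff : Differentiable ℝ Y := hY.differentiable two_ne_zero
  have hβdiff : Differentiable ℝ β := hβ.differentiable (by simp)
  have hderiv_s (τ s : ℝ) (i : Fin d) : deriv (fun σ => X τ σ i) s = fderiv ℝ Y (τ, s) (0, 1) i :=
    (hasDerivAt_pi.1 (hYdiff _).hasDerivAt_comp_prodMk_right i).deriv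
  have hderiv_t (τ s : ℝ) : fderiv ℝ Y (τ, s) (1, 0) = v τ (X τ s) := funext fun i =>
    (hasDerivAt_pi.1 (hYdiff _).hasDerivAt_comp_prodMk_left i).deriv.symm.trans (hflow τ s i)
  have hX₁ (τ : ℝ) : X τ 1 = X τ 0 + fun i => (N i : ℝ) := by simpa using hper τ 0
  have hvel₁ : fderiv ℝ Y (t, 1) (1, 0) = fderiv ℝ Y (t, 0) (1, 0) := by
    have h₁ := (hYdiff (t, 1)).hasDerivAt_comp_prodMk_left
    simp only [Y, hX₁] at h₁
    exact h₁.unique ((hYdiff (t, 0)).hasDerivAt_comp_prodMk_left.add_const _)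
  have key := hasDerivAt_integral_oneForm_apply_fderiv hY
    ((dotProductCLM (Fin d)).contDiff.comp (hβ.of_le (WithTop.coe_le_coe.2 le_top))) 0 1 t
    (by simp only [Function.comp_apply, Y, hvel₁, hX₁, hβper])
  convert key using 1
  · funext τ
    exact integral_congr fun s _ => by simp [hderiv_s, Y]
  · refine integral_congr fun s _ => ?_
    simp only [Function.comp_def, fderiv_dotProductCLM_comp_sub (hβdiff _), hderiv_s, hderiv_t, Y]

/-- For a smooth moving loop `X` transported by a smooth velocity
field `v` (`∂_t X(t,s) = v(t, X(t,s))`) and a smooth `ℤ^d`-periodic trial field `β`,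
`d/dt ∫₀¹ β(X)·∂_s X ds = ∫₀¹ ∂_j β_i(X) (v^j(t,X) ∂_s X^i − ∂_s X^j v^i(t,X)) ds`:
the loop-generated field `B` solves the induction equation
`∂_t B + ∇·(B⊗v − v⊗B) = 0` in the sense of distributions. -/
theorem stmt_2 (d : ℕ) (X : ℝ → ℝ → Fin d → ℝ) (N : Fin d → ℤ)
    (v : ℝ → (Fin d → ℝ) → Fin d → ℝ) (β : (Fin d → ℝ) → Fin d → ℝ)
    (hX : ContDiff ℝ (⊤ : ℕ∞) (fun p : ℝ × ℝ => X p.1 p.2))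
    (hv : ContDiff ℝ (⊤ : ℕ∞) (fun p : ℝ × (Fin d → ℝ) => v p.1 p.2))
    (hβ : ContDiff ℝ (⊤ : ℕ∞) β)
    (hper : ∀ t s : ℝ, X t (s + 1) = X t s + fun i => (N i : ℝ))
    (hβper : ∀ (x : Fin d → ℝ) (k : Fin d → ℤ), β (x + fun i => (k i : ℝ)) = β x)
    (hflow : ∀ (t s : ℝ) (i : Fin d), deriv (fun τ => X τ s i) t = v t (X t s) i) :
    ∀ t : ℝ, HasDerivAt
      (fun τ => ∫ s in (0:ℝ)..1, ∑ i, β (X τ s) i * deriv (fun σ => X τ σ i) s)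
      (∫ s in (0:ℝ)..1, ∑ i, ∑ j, pd j (fun x => β x i) (X t s) *
        (v t (X t s) j * deriv (fun σ => X t σ i) s
          - deriv (fun σ => X t σ j) s * v t (X t s) i)) t :=
  stmt_2_general d X N v β hX hβ hper hβper hflow

end
end

section
/- Let F : (0,∞) × ℝ^d → ℝ be a C² function, and let ρ : [0,T] × ℝ^d → (0,∞), B : [0,T] × ℝ^d → ℝ^d, v : [0,T] × ℝ^d → ℝ^d be smooth maps, ℤ^d-periodic in the space variable, satisfying ∇·B = 0, the continuity equation ∂_t ρ + ∇·(ρ v) = 0, and the induction equation ∂_t B + ∇·(B⊗v − v⊗B) = 0. Then for every t ∈ [0,T], d/dt ∫_{[0,1]^d} F(ρ(t,x), B(t,x)) dx = − ∫_{[0,1]^d} v(t,x) · G(t,x) dx, where G_i = −ρ ∂_i( F_ρ(ρ,B) ) + ( ∂_j( F_{B^i}(ρ,B) ) − ∂_i( F_{B^j}(ρ,B) ) ) B^j, with F_ρ and F_{B^i} the partial derivatives of F and summation over repeated indices. -/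
/-!
Differentiating under the integral sign, `d/dt ∫ F(ρ, B)` is the integral of
`DF(ρ, B)(∂ₜρ, ∂ₜB) = F_ρ ∂ₜρ + F_{B^i} ∂ₜB^i`. The continuity and induction equations write
`∂ₜρ` and `∂ₜB^i` as divergences; moving `∂_j` off them by the product rule leaves the
divergence of a periodic flux, which integrates to zero over the unit cube (divergence theorem,
opposite faces cancel), plus the terms `∂_j F_ρ ρ v^j + ∂_j F_{B^i} (B^i v^j - v^i B^j)`, which
regroup as `-v · G`.
-/

open MeasureTheory intervalIntegral

noncomputable section

/-- The force `G`, with `a = F_ρ(ρ, B)` and `c i = F_{B^i}(ρ, B)`. -/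
def force {d : ℕ} (a r : (Fin d → ℝ) → ℝ) (c : Fin d → (Fin d → ℝ) → ℝ)
    (B : (Fin d → ℝ) → Fin d → ℝ) (x : Fin d → ℝ) (i : Fin d) : ℝ :=
  -(r x) * pd i a x + ∑ j, (pd j (c i) x - pd i (c j) x) * B x j

theorem periodic_pi_single_of_forall_int {α : Type*} {d : ℕ} {f : (Fin d → ℝ) → α}
    (hf : ∀ (x : Fin d → ℝ) (k : Fin d → ℤ), f (x + fun i => (k i : ℝ)) = f x) (j : Fin d) :
    Function.Periodic f (Pi.single j 1) := fun x => by
  convert hf x (Pi.single j 1) using 3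
  ext i
  simp [Pi.single_apply]

section pd

variable {d : ℕ} (j : Fin d) {f g : (Fin d → ℝ) → ℝ} {x : Fin d → ℝ}

theorem pd_add (hf : DifferentiableAt ℝ f x) (hg : DifferentiableAt ℝ g x) :
    pd j (fun y => f y + g y) x = pd j f x + pd j g x := by
  simp [pd, fderiv_fun_add hf hg]

theorem pd_mul (hf : DifferentiableAt ℝ f x) (hg : DifferentiableAt ℝ g x) :
    pd j (fun y => f y * g y) x = pd j f x * g x + f x * pd j g x := by
  simp [pd, fderiv_fun_mul hf hg]
  ring

theorem pd_sum {ι : Type*} (s : Finset ι) {f : ι → (Fin d → ℝ) → ℝ}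
    (hf : ∀ i ∈ s, DifferentiableAt ℝ (f i) x) :
    pd j (fun y => ∑ i ∈ s, f i y) x = ∑ i ∈ s, pd j (f i) x := by
  simp [pd, fderiv_fun_sum hf]

@[fun_prop]
theorem continuous_pd (hf : ContDiff ℝ 1 f) : Continuous (pd j f) :=
  (hf.continuous_fderiv one_ne_zero).clm_apply continuous_const

end pd

theorem integral_sum_pd_eq_zero_of_periodic {d : ℕ} (W : Fin d → (Fin d → ℝ) → ℝ)
    (hW : ∀ j, ContDiff ℝ 1 (W j)) (hper : ∀ j, Function.Periodic (W j) (Pi.single j 1)) :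
    ∫ x in Set.Icc (0 : Fin d → ℝ) 1, ∑ j, pd j (W j) x = 0 := by
  cases d with
  | zero => simp
  | succ n =>
    have hface : ∀ (j : Fin (n + 1)) (x : Fin n → ℝ),
        (j.insertNth (1 : ℝ) x : Fin (n + 1) → ℝ) = j.insertNth (0 : ℝ) x + Pi.single j 1 := by
      intro j x
      ext k
      rcases Fin.eq_self_or_eq_succAbove j k with rfl | ⟨k, rfl⟩ <;> simp
    refine (integral_divergence_of_hasFDerivAt_off_countable' 0 1 zero_le_one W
      (fun j => fderiv ℝ (W j)) ∅ Set.countable_empty (fun j => (hW j).continuous.continuousOn)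
      (fun x _ j => ((hW j).differentiable one_ne_zero x).hasFDerivAt)
      ((continuous_finsetSum _ fun j _ => continuous_pd j (hW j)).continuousOn.integrableOn_compact
        isCompact_Icc)).trans ?_
    refine Finset.sum_eq_zero fun j _ => sub_eq_zero.2 <| integral_congr_ae <| ae_of_all _ fun x => ?_
    simp only [Pi.one_apply, Pi.zero_apply, hface, hper j _]

theorem hasDerivAt_setIntegral_of_continuous {X G : Type*} [TopologicalSpace X]
    [MeasurableSpace X] [OpensMeasurableSpace X] [T2Space X] [SecondCountableTopology X]
    [NormedAddCommGroup G] [NormedSpace ℝ G] [CompleteSpace G]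
    {μ : Measure X} [IsFiniteMeasureOnCompacts μ] {K : Set X} (hK : IsCompact K)
    {Φ Φ' : ℝ → X → G} (hΦ : Continuous (fun p : ℝ × X => Φ p.1 p.2))
    (hΦ' : Continuous (fun p : ℝ × X => Φ' p.1 p.2))
    (hderiv : ∀ τ x, HasDerivAt (fun s => Φ s x) (Φ' τ x) τ) (t : ℝ) :
    HasDerivAt (fun τ => ∫ x in K, Φ τ x ∂μ) (∫ x in K, Φ' t x ∂μ) t := by
  have hslice : ∀ {Ψ : ℝ → X → G}, Continuous (fun p : ℝ × X => Ψ p.1 p.2) →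
      ∀ τ, Continuous (Ψ τ) := fun hΨ τ => hΨ.comp (Continuous.prodMk_right τ)
  obtain ⟨M, hM⟩ := ((isCompact_closedBall t 1).prod hK).exists_bound_of_continuousOn
    hΦ'.continuousOn
  refine (hasDerivAt_integral_of_dominated_loc_of_deriv_le (bound := fun _ => M)
    (Metric.ball_mem_nhds t one_pos)
    (.of_forall fun τ => (hslice hΦ τ).aestronglyMeasurable)
    ((hslice hΦ t).continuousOn.integrableOn_compact hK)
    (hslice hΦ' t).aestronglyMeasurable ?_ (integrableOn_const hK.measure_ne_top)
    (ae_of_all _ fun x τ _ => hderiv τ x)).2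
  filter_upwards [ae_restrict_mem₀ hK.measurableSet.nullMeasurableSet] with x hx τ hτ
  exact hM (τ, x) ⟨Metric.ball_subset_closedBall hτ, hx⟩

section chainRule

variable {X H G : Type*} [NormedAddCommGroup X] [NormedSpace ℝ X]
  [NormedAddCommGroup H] [NormedSpace ℝ H] [NormedAddCommGroup G] [NormedSpace ℝ G]

theorem ContDiffOn.contDiff_fderiv_comp {n : WithTop ℕ∞} {F : H → G} {U : Set H}
    (hF : ContDiffOn ℝ (n + 1) F U) (hU : IsOpen U) {u : X → H} (hu : ContDiff ℝ n u)
    (huU : ∀ x, u x ∈ U) :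
    ContDiff ℝ n (fun x => fderiv ℝ F (u x)) :=
  contDiffOn_univ.1 <| (hF.fderiv_of_isOpen hU le_rfl).comp hu.contDiffOn fun x _ => huU x

theorem DifferentiableAt.hasDerivAt_partial_fst {u : ℝ → X → H} {τ : ℝ} {x : X}
    (hu : DifferentiableAt ℝ (fun p : ℝ × X => u p.1 p.2) (τ, x)) :
    HasDerivAt (fun s => u s x) (fderiv ℝ (fun p : ℝ × X => u p.1 p.2) (τ, x) (1, 0)) τ :=
  HasFDerivAt.comp_hasDerivAt (l := fun p : ℝ × X => u p.1 p.2) τ hu.hasFDerivAt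
    ((hasDerivAt_id τ).prodMk (hasDerivAt_const τ x))

theorem hasDerivAt_setIntegral_comp [CompleteSpace G] [MeasurableSpace X] [BorelSpace X]
    [SecondCountableTopology X] {μ : Measure X} [IsFiniteMeasureOnCompacts μ] {K : Set X}
    (hK : IsCompact K) {F : H → G} {U : Set H} (hF : ContDiffOn ℝ 1 F U) (hU : IsOpen U)
    {u : ℝ → X → H} (hu : ContDiff ℝ 1 (fun p : ℝ × X => u p.1 p.2)) (huU : ∀ τ x, u τ x ∈ U)
    (t : ℝ) :
    HasDerivAt (fun τ => ∫ x in K, F (u τ x) ∂μ)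
      (∫ x in K, fderiv ℝ F (u t x) (deriv (fun τ => u τ x) t) ∂μ) t := by
  set u' : ℝ × X → H := fun p => fderiv ℝ (fun p : ℝ × X => u p.1 p.2) p (1, 0)
  have hu' : ∀ τ x, HasDerivAt (fun s => u s x) (u' (τ, x)) τ :=
    fun τ x => (hu.differentiable one_ne_zero _).hasDerivAt_partial_fst
  simp only [fun x => (hu' t x).deriv]
  refine hasDerivAt_setIntegral_of_continuous (μ := μ) (Φ := fun τ x => F (u τ x))
    (Φ' := fun τ x => fderiv ℝ F (u τ x) (u' (τ, x))) hK
    (hF.continuousOn.comp_continuous hu.continuous fun p => huU p.1 p.2) ?_ (fun τ x => ?_) t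
  · exact ((ContDiffOn.contDiff_fderiv_comp (n := 0) (by simpa using hF) hU
      (hu.of_le zero_le_one) fun p => huU p.1 p.2).continuous).clm_apply
      ((hu.continuous_fderiv one_ne_zero).clm_apply continuous_const)
  · exact ((hF.differentiableOn one_ne_zero).differentiableAt
      (hU.mem_nhds (huU τ x))).hasFDerivAt.comp_hasDerivAt τ (hu' τ x)

end chainRule

theorem ContinuousLinearMap.apply_prod_eq_sum {d : ℕ} (L : ℝ × (Fin d → ℝ) →L[ℝ] ℝ) (a : ℝ)
    (b : Fin d → ℝ) :
    L (a, b) = L (1, 0) * a + ∑ i, L (0, Pi.single i 1) * b i := by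
  have hab : ((a, b) : ℝ × (Fin d → ℝ)) = a • (1, 0) + ∑ i, b i • (0, Pi.single i 1) := by
    ext i
    · simp [Prod.fst_sum]
    · simp [Prod.snd_sum, Pi.single_apply]
  rw [hab, map_add, map_smul, map_sum]
  simp only [map_smul, smul_eq_mul, mul_comm]

theorem sum_grad_mul_flux_eq_neg_dot {d : ℕ} (r : ℝ) (da : Fin d → ℝ) (dc : Fin d → Fin d → ℝ)
    (B v : Fin d → ℝ) :
    ∑ j, (da j * (r * v j) + ∑ i, dc i j * (B i * v j - v i * B j))
      = -∑ i, v i * (-r * da i + ∑ j, (dc i j - dc j i) * B j) := by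
  have hρ : ∑ j, da j * (r * v j) = ∑ i, v i * (r * da i) :=
    Finset.sum_congr rfl fun i _ => by ring
  have hBv : ∑ j, ∑ i, dc i j * (B i * v j) = ∑ i, v i * ∑ j, dc j i * B j :=
    Finset.sum_congr rfl fun i _ => by
      rw [Finset.mul_sum]
      exact Finset.sum_congr rfl fun j _ => by ring
  have hvB : ∑ j, ∑ i, dc i j * (v i * B j) = ∑ i, v i * ∑ j, dc i j * B j := by
    rw [Finset.sum_comm]
    exact Finset.sum_congr rfl fun i _ => by
      rw [Finset.mul_sum]
      exact Finset.sum_congr rfl fun j _ => by ring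
  simp only [Finset.sum_add_distrib, mul_sub, sub_mul, Finset.sum_sub_distrib, mul_add, neg_mul,
    mul_neg, Finset.sum_neg_distrib, hρ, hBv, hvB]
  ring

section transport

variable {d : ℕ} {r : (Fin d → ℝ) → ℝ} {B v : (Fin d → ℝ) → Fin d → ℝ}

theorem mul_neg_div_add_sum_mul_neg_div_eq {a : (Fin d → ℝ) → ℝ}
    {c : Fin d → (Fin d → ℝ) → ℝ} (ha : Differentiable ℝ a) (hc : ∀ i, Differentiable ℝ (c i))
    (hr : Differentiable ℝ r) (hB : Differentiable ℝ B) (hv : Differentiable ℝ v)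
    (x : Fin d → ℝ) :
    a x * -∑ j, pd j (fun y => r y * v y j) x
        + ∑ i, c i x * -∑ j, pd j (fun y => B y i * v y j - v y i * B y j) x
      = -∑ j, pd j (fun y => a y * (r y * v y j)
          + ∑ i, c i y * (B y i * v y j - v y i * B y j)) x
        - ∑ i, v x i * force a r c B x i := by
  have hprod : ∀ j, pd j (fun y => a y * (r y * v y j)
      + ∑ i, c i y * (B y i * v y j - v y i * B y j)) x
        = (pd j a x * (r x * v x j) + ∑ i, pd j (c i) x * (B x i * v x j - v x i * B x j))
          + (a x * pd j (fun y => r y * v y j) x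
            + ∑ i, c i x * pd j (fun y => B y i * v y j - v y i * B y j) x) := by
    intro j
    have hQ : ∀ i, DifferentiableAt ℝ (fun y => B y i * v y j - v y i * B y j) x :=
      fun i => by fun_prop
    rw [pd_add j (by fun_prop) (by fun_prop), pd_mul j (ha x) (by fun_prop),
      pd_sum j _ fun i _ => by fun_prop]
    simp only [fun i => pd_mul j (hc i x) (hQ i), Finset.sum_add_distrib]
    ring
  rw [Finset.sum_congr rfl fun j _ => hprod j, Finset.sum_add_distrib,
    sum_grad_mul_flux_eq_neg_dot]
  simp only [force, mul_neg, Finset.mul_sum, Finset.sum_add_distrib, Finset.sum_neg_distrib]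
  rw [Finset.sum_comm (f := fun i j => c i x * pd j (fun y => B y i * v y j - v y i * B y j) x)]
  ring

theorem integral_apply_transport_eq {L : (Fin d → ℝ) → ℝ × (Fin d → ℝ) →L[ℝ] ℝ}
    (hL : ContDiff ℝ 1 L) (hr : ContDiff ℝ 1 r) (hB : ContDiff ℝ 1 B) (hv : ContDiff ℝ 1 v)
    (hLp : ∀ j, Function.Periodic L (Pi.single j 1))
    (hrp : ∀ j, Function.Periodic r (Pi.single j 1))
    (hBp : ∀ j, Function.Periodic B (Pi.single j 1))
    (hvp : ∀ j, Function.Periodic v (Pi.single j 1)) :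
    ∫ x in Set.Icc (0 : Fin d → ℝ) 1, L x (-∑ j, pd j (fun y => r y * v y j) x,
        fun i => -∑ j, pd j (fun y => B y i * v y j - v y i * B y j) x)
      = -∫ x in Set.Icc (0 : Fin d → ℝ) 1, ∑ i, v x i *
          force (fun y => L y (1, 0)) r (fun i y => L y (0, Pi.single i 1)) B x i := by
  have hpt := mul_neg_div_add_sum_mul_neg_div_eq (a := fun y => L y (1, 0))
    (c := fun i y => L y (0, Pi.single i 1)) (by fun_prop) (fun i => by fun_prop)
    (hr.differentiable one_ne_zero) (hB.differentiable one_ne_zero)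
    (hv.differentiable one_ne_zero)
  simp only [← ContinuousLinearMap.apply_prod_eq_sum] at hpt
  have hrc := hr.continuous
  have hBc := hB.continuous
  have hvc := hv.continuous
  rw [setIntegral_congr_fun measurableSet_Icc fun x _ => hpt x, MeasureTheory.integral_sub,
    MeasureTheory.integral_neg, integral_sum_pd_eq_zero_of_periodic, neg_zero, zero_sub]
  · exact fun j => by fun_prop
  · exact fun j x => by simp only [hLp j x, hrp j x, hBp j x, hvp j x]
  · exact (Continuous.continuousOn (by fun_prop)).integrableOn_compact isCompact_Icc
  · exact (Continuous.continuousOn (by simp only [force]; fun_prop)).integrableOn_compact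
      isCompact_Icc

end transport

theorem deriv_prodMk_eq_neg_div {d : ℕ} {ρ : ℝ → (Fin d → ℝ) → ℝ}
    {B v : ℝ → (Fin d → ℝ) → Fin d → ℝ}
    (hρ : Differentiable ℝ (fun p : ℝ × (Fin d → ℝ) => ρ p.1 p.2))
    (hB : Differentiable ℝ (fun p : ℝ × (Fin d → ℝ) => B p.1 p.2)) {t : ℝ} {x : Fin d → ℝ}
    (hcont : deriv (fun τ => ρ τ x) t + ∑ j, pd j (fun y => ρ t y * v t y j) x = 0)
    (hind : ∀ i, deriv (fun τ => B τ x i) t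
      + ∑ j, pd j (fun y => B t y i * v t y j - v t y i * B t y j) x = 0) :
    deriv (fun τ => (ρ τ x, B τ x)) t
      = (-∑ j, pd j (fun y => ρ t y * v t y j) x,
          fun i => -∑ j, pd j (fun y => B t y i * v t y j - v t y i * B t y j) x) := by
  have hρx := (hρ (t, x)).hasDerivAt_partial_fst
  have hBx := (hB (t, x)).hasDerivAt_partial_fst
  rw [(hρx.prodMk hBx).deriv, ← hρx.deriv, eq_neg_of_add_eq_zero_left hcont]
  congr 1
  ext i
  rw [← (hasDerivAt_pi.1 hBx i).deriv, eq_neg_of_add_eq_zero_left (hind i)]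

theorem stmt_5_general (d : ℕ) (T : ℝ)
    (F : ℝ × (Fin d → ℝ) → ℝ)
    (ρ : ℝ → (Fin d → ℝ) → ℝ) (B v : ℝ → (Fin d → ℝ) → Fin d → ℝ)
    (hF : ContDiffOn ℝ 2 F (Set.Ioi (0:ℝ) ×ˢ (Set.univ : Set (Fin d → ℝ))))
    (hρ : ContDiff ℝ (⊤ : ℕ∞) (fun p : ℝ × (Fin d → ℝ) => ρ p.1 p.2))
    (hB : ContDiff ℝ (⊤ : ℕ∞) (fun p : ℝ × (Fin d → ℝ) => B p.1 p.2))
    (hv : ContDiff ℝ (⊤ : ℕ∞) (fun p : ℝ × (Fin d → ℝ) => v p.1 p.2))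
    (hρpos : ∀ t x, 0 < ρ t x)
    (hρper : ∀ (t : ℝ) (x : Fin d → ℝ) (k : Fin d → ℤ), ρ t (x + fun i => (k i : ℝ)) = ρ t x)
    (hBper : ∀ (t : ℝ) (x : Fin d → ℝ) (k : Fin d → ℤ), B t (x + fun i => (k i : ℝ)) = B t x)
    (hvper : ∀ (t : ℝ) (x : Fin d → ℝ) (k : Fin d → ℤ), v t (x + fun i => (k i : ℝ)) = v t x)
    (hcont : ∀ t ∈ Set.Icc (0:ℝ) T, ∀ x,
      deriv (fun τ => ρ τ x) t + ∑ j, pd j (fun y => ρ t y * v t y j) x = 0)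
    (hind : ∀ t ∈ Set.Icc (0:ℝ) T, ∀ x, ∀ i, deriv (fun τ => B τ x i) t
      + ∑ j, pd j (fun y => B t y i * v t y j - v t y i * B t y j) x = 0) :
    ∀ t ∈ Set.Icc (0:ℝ) T, HasDerivAt
      (fun τ => ∫ x in Set.Icc (0 : Fin d → ℝ) 1, F (ρ τ x, B τ x))
      (-∫ x in Set.Icc (0 : Fin d → ℝ) 1, ∑ i, v t x i *
        (-(ρ t x) * pd i (fun y => fderiv ℝ F (ρ t y, B t y) ((1 : ℝ), (0 : Fin d → ℝ))) x
          + ∑ j, (pd j (fun y => fderiv ℝ F (ρ t y, B t y) ((0 : ℝ), Pi.single i 1)) x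
              - pd i (fun y => fderiv ℝ F (ρ t y, B t y) ((0 : ℝ), Pi.single j 1)) x)
            * B t x j)) t := by
  intro t ht
  have hU : IsOpen (Set.Ioi (0:ℝ) ×ˢ (Set.univ : Set (Fin d → ℝ))) := isOpen_Ioi.prod isOpen_univ
  have huU : ∀ τ x, (ρ τ x, B τ x) ∈ Set.Ioi (0:ℝ) ×ˢ (Set.univ : Set (Fin d → ℝ)) :=
    fun τ x => ⟨hρpos τ x, trivial⟩
  have hsmooth : (1 : WithTop ℕ∞) ≤ ((⊤ : ℕ∞) : WithTop ℕ∞) := by exact_mod_cast le_top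
  have hρt : ContDiff ℝ 1 (ρ t) := (hρ.of_le hsmooth).comp (contDiff_prodMk_right t)
  have hBt : ContDiff ℝ 1 (B t) := (hB.of_le hsmooth).comp (contDiff_prodMk_right t)
  have hvt : ContDiff ℝ 1 (v t) := (hv.of_le hsmooth).comp (contDiff_prodMk_right t)
  have hρp := periodic_pi_single_of_forall_int (hρper t)
  have hBp := periodic_pi_single_of_forall_int (hBper t)
  have hderiv := hasDerivAt_setIntegral_comp (μ := volume)
    (isCompact_Icc (a := (0 : Fin d → ℝ)) (b := 1)) (hF.of_le one_le_two) hU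
    ((hρ.prodMk hB).of_le hsmooth) huU t
  simp only [fun x => deriv_prodMk_eq_neg_div (v := v) (hρ.differentiable (by simp))
    (hB.differentiable (by simp)) (hcont t ht x) (hind t ht x)] at hderiv
  rwa [integral_apply_transport_eq (L := fun y => fderiv ℝ F (ρ t y, B t y))
    ((hF.of_le (by norm_num)).contDiff_fderiv_comp hU (hρt.prodMk hBt) (huU t)) hρt hBt hvt
    (fun j x => by simp only [hρp j x, hBp j x]) hρp hBp
    (periodic_pi_single_of_forall_int (hvper t))] at hderiv

/-- Steepest-descent computation: if `ρ, B, v` are smooth periodic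
fields with `∇·B = 0`, solving the continuity equation `∂_t ρ + ∇·(ρv) = 0` and the
induction equation `∂_t B + ∇·(B⊗v − v⊗B) = 0`, and `F` is `C²` on `(0,∞) × ℝ^d`, then
`d/dt ∫ F(ρ,B) dx = −∫ v·G dx` where
`G_i = −ρ ∂_i(F_ρ(ρ,B)) + (∂_j(F_{B^i}(ρ,B)) − ∂_i(F_{B^j}(ρ,B))) B^j`. -/
theorem stmt_5 (d : ℕ) (T : ℝ) (hT : 0 < T)
    (F : ℝ × (Fin d → ℝ) → ℝ)
    (ρ : ℝ → (Fin d → ℝ) → ℝ) (B v : ℝ → (Fin d → ℝ) → Fin d → ℝ)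
    (hF : ContDiffOn ℝ 2 F (Set.Ioi (0:ℝ) ×ˢ (Set.univ : Set (Fin d → ℝ))))
    (hρ : ContDiff ℝ (⊤ : ℕ∞) (fun p : ℝ × (Fin d → ℝ) => ρ p.1 p.2))
    (hB : ContDiff ℝ (⊤ : ℕ∞) (fun p : ℝ × (Fin d → ℝ) => B p.1 p.2))
    (hv : ContDiff ℝ (⊤ : ℕ∞) (fun p : ℝ × (Fin d → ℝ) => v p.1 p.2))
    (hρpos : ∀ t x, 0 < ρ t x)
    (hρper : ∀ (t : ℝ) (x : Fin d → ℝ) (k : Fin d → ℤ), ρ t (x + fun i => (k i : ℝ)) = ρ t x)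
    (hBper : ∀ (t : ℝ) (x : Fin d → ℝ) (k : Fin d → ℤ), B t (x + fun i => (k i : ℝ)) = B t x)
    (hvper : ∀ (t : ℝ) (x : Fin d → ℝ) (k : Fin d → ℤ), v t (x + fun i => (k i : ℝ)) = v t x)
    (hdivB : ∀ t ∈ Set.Icc (0:ℝ) T, ∀ x, ∑ j, pd j (fun y => B t y j) x = 0)
    (hcont : ∀ t ∈ Set.Icc (0:ℝ) T, ∀ x,
      deriv (fun τ => ρ τ x) t + ∑ j, pd j (fun y => ρ t y * v t y j) x = 0)
    (hind : ∀ t ∈ Set.Icc (0:ℝ) T, ∀ x, ∀ i, deriv (fun τ => B τ x i) t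
      + ∑ j, pd j (fun y => B t y i * v t y j - v t y i * B t y j) x = 0) :
    ∀ t ∈ Set.Icc (0:ℝ) T, HasDerivAt
      (fun τ => ∫ x in Set.Icc (0 : Fin d → ℝ) 1, F (ρ τ x, B τ x))
      (-∫ x in Set.Icc (0 : Fin d → ℝ) 1, ∑ i, v t x i *
        (-(ρ t x) * pd i (fun y => fderiv ℝ F (ρ t y, B t y) ((1 : ℝ), (0 : Fin d → ℝ))) x
          + ∑ j, (pd j (fun y => fderiv ℝ F (ρ t y, B t y) ((0 : ℝ), Pi.single i 1)) x
              - pd i (fun y => fderiv ℝ F (ρ t y, B t y) ((0 : ℝ), Pi.single j 1)) x)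
            * B t x j)) t :=
  stmt_5_general d T F ρ B v hF hρ hB hv hρpos hρper hBper hvper hcont hind
end
end

section
/- Let X : [0,T] × ℝ → ℝ^d be smooth and solve the heat equation ∂_t X(t,s) = ∂²_{ss} X(t,s), and suppose there exist smooth vector fields b, v : [0,T] × ℝ^d → ℝ^d such that ∂_s X(t,s) = b(t, X(t,s)) and ∂_t X(t,s) = v(t, X(t,s)) for all (t,s). Then for all (t,s): v(t,X(t,s)) = ((b·∇)b)(t, X(t,s)), and ( ∂_t b + (v·∇)b − (b·∇)v )(t, X(t,s)) = 0. -/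
noncomputable section

/-! Differentiating `∂_s X = b(t, X)` in `s` and using the heat equation gives
`v = ∂_s² X = (b·∇)b`. Differentiating the same identity in `t` gives
`∂_t ∂_s X = ∂_t b + (v·∇)b`, while differentiating `∂_t X = v(t, X)` in `s` gives
`∂_s ∂_t X = (b·∇)v`; the two agree by the symmetry of mixed partial derivatives. -/

open Set

lemma ContinuousLinearMap.apply_eq_sum_mul_apply_single {d : ℕ} (A : (Fin d → ℝ) →L[ℝ] ℝ)
    (u : Fin d → ℝ) : A u = ∑ j, u j * A (Pi.single j 1) := by
  conv_lhs => rw [pi_eq_sum_univ' u]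
  simp [map_sum, map_smul]

lemma hasDerivAt_comp_sum_pd {d : ℕ} {g : (Fin d → ℝ) → ℝ} {γ : ℝ → Fin d → ℝ}
    {γ' : Fin d → ℝ} {s : ℝ} (hg : DifferentiableAt ℝ g (γ s)) (hγ : HasDerivAt γ γ' s) :
    HasDerivAt (fun σ => g (γ σ)) (∑ j, γ' j * pd j g (γ s)) s := by
  have h := hg.hasFDerivAt.comp_hasDerivAt s hγ
  rwa [(fderiv ℝ g (γ s)).apply_eq_sum_mul_apply_single γ'] at h

lemma hasDerivAt_comp_prodMk_sum_pd {d : ℕ} {F : ℝ × (Fin d → ℝ) → ℝ}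
    {γ : ℝ → Fin d → ℝ} {γ' : Fin d → ℝ} {t : ℝ} (hF : DifferentiableAt ℝ F (t, γ t))
    (hγ : HasDerivAt γ γ' t) :
    HasDerivAt (fun τ => F (τ, γ τ))
      (deriv (fun τ => F (τ, γ t)) t + ∑ j, γ' j * pd j (fun y => F (t, y)) (γ t)) t := by
  set L := fderiv ℝ F (t, γ t)
  have hL : HasFDerivAt F L (t, γ t) := hF.hasFDerivAt
  have h_time : HasDerivAt (fun τ => F (τ, γ t)) (L (1, 0)) t :=
    hL.comp_hasDerivAt t ((hasDerivAt_id t).prodMk (hasDerivAt_const t (γ t)))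
  have h_space : HasFDerivAt (fun y => F (t, y)) (L.comp (.inr ℝ ℝ _)) (γ t) :=
    hL.comp (γ t) (hasFDerivAt_prodMk_right t (γ t))
  have h_split : L (1, γ') = L (1, 0) + L (0, γ') := by
    rw [← map_add, Prod.mk_add_mk, add_zero, zero_add]
  have h := hL.comp_hasDerivAt t ((hasDerivAt_id t).prodMk hγ)
  rw [h_split] at h
  have h_sum : ∑ j, γ' j * pd j (fun y => F (t, y)) (γ t) = L (0, γ') := by
    calc ∑ j, γ' j * pd j (fun y => F (t, y)) (γ t) = ∑ j, γ' j * L (0, Pi.single j 1) := by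
          simp [pd, h_space.fderiv]
      _ = L (0, γ') := ((L.comp (.inr ℝ ℝ _)).apply_eq_sum_mul_apply_single γ').symm
  rwa [h_time.deriv, h_sum]

lemma deriv_eq_of_eqOn_Icc {f g : ℝ → ℝ} {a b t : ℝ} (hab : a < b) (ht : t ∈ Icc a b)
    (hf : DifferentiableAt ℝ f t) (hg : DifferentiableAt ℝ g t) (hfg : EqOn f g (Icc a b)) :
    deriv f t = deriv g t :=
  (uniqueDiffOn_Icc hab t ht).eq_deriv _ hf.hasDerivAt.hasDerivWithinAt
    (hg.hasDerivAt.hasDerivWithinAt.congr_of_mem (fun _ hx => hfg hx) ht)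

lemma ContDiff.hasDerivAt_deriv_deriv_swap {F : ℝ × ℝ → ℝ} (hF : ContDiff ℝ 2 F) (t s : ℝ) :
    HasDerivAt (fun τ => deriv (fun σ => F (τ, σ)) s)
      (deriv (fun σ => deriv (fun τ => F (τ, σ)) t) s) t := by
  have hF1 : Differentiable ℝ F := hF.differentiable (by norm_num)
  have hF2 : Differentiable ℝ (fderiv ℝ F) :=
    (hF.fderiv_right (m := 1) (by norm_num)).differentiable (by norm_num)
  have h_horiz : ∀ σ, HasDerivAt (fun τ : ℝ => (τ, σ)) ((1 : ℝ), (0 : ℝ)) t := fun σ =>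
    (hasDerivAt_id t).prodMk (hasDerivAt_const t σ)
  have h_vert : ∀ τ, HasDerivAt (fun σ : ℝ => (τ, σ)) ((0 : ℝ), (1 : ℝ)) s := fun τ =>
    (hasDerivAt_const s τ).prodMk (hasDerivAt_id s)
  have h_ds :
      (fun τ => deriv (fun σ => F (τ, σ)) s) = fun τ => fderiv ℝ F (τ, s) ((0 : ℝ), (1 : ℝ)) :=
    funext fun τ => ((hF1 _).hasFDerivAt.comp_hasDerivAt s (h_vert τ)).deriv
  have h_dt :
      (fun σ => deriv (fun τ => F (τ, σ)) t) = fun σ => fderiv ℝ F (t, σ) ((1 : ℝ), (0 : ℝ)) :=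
    funext fun σ => ((hF1 _).hasFDerivAt.comp_hasDerivAt t (h_horiz σ)).deriv
  have h_dst := ((hF2 _).hasFDerivAt.comp_hasDerivAt t (h_horiz s)).clm_apply
    (hasDerivAt_const t ((0 : ℝ), (1 : ℝ)))
  have h_dts := ((hF2 _).hasFDerivAt.comp_hasDerivAt s (h_vert t)).clm_apply
    (hasDerivAt_const s ((1 : ℝ), (0 : ℝ)))
  simp only [Function.comp_def, map_zero, add_zero] at h_dst h_dts
  have h_symm := (hF.contDiffAt (x := (t, s))).isSymmSndFDerivAt (by simp)
  rw [h_ds, h_dt, h_dts.deriv, h_symm ((0 : ℝ), (1 : ℝ)) ((1 : ℝ), (0 : ℝ))]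
  exact h_dst

/-- If a smooth solution `X` of the 1-d heat equation
`∂_t X = ∂²_{ss} X` admits smooth fields `b, v` with `∂_s X(t,s) = b(t,X(t,s))`
and `∂_t X(t,s) = v(t,X(t,s))`, then along the loop `v = (b·∇)b` and
`∂_t b + (v·∇)b − (b·∇)v = 0`. -/
theorem stmt_10 (d : ℕ) (T : ℝ) (hT : 0 < T)
    (X : ℝ → ℝ → Fin d → ℝ) (b v : ℝ → (Fin d → ℝ) → Fin d → ℝ)
    (hX : ContDiff ℝ (⊤ : ℕ∞) (fun p : ℝ × ℝ => X p.1 p.2))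
    (hb : ContDiff ℝ (⊤ : ℕ∞) (fun p : ℝ × (Fin d → ℝ) => b p.1 p.2))
    (hv : ContDiff ℝ (⊤ : ℕ∞) (fun p : ℝ × (Fin d → ℝ) => v p.1 p.2))
    (hheat : ∀ t ∈ Set.Icc (0:ℝ) T, ∀ (s : ℝ) (i : Fin d), deriv (fun τ => X τ s i) t
      = deriv (fun σ => deriv (fun σ' => X t σ' i) σ) s)
    (hbX : ∀ t ∈ Set.Icc (0:ℝ) T, ∀ (s : ℝ) (i : Fin d),
      deriv (fun σ => X t σ i) s = b t (X t s) i)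
    (hvX : ∀ t ∈ Set.Icc (0:ℝ) T, ∀ (s : ℝ) (i : Fin d),
      deriv (fun τ => X τ s i) t = v t (X t s) i) :
    ∀ t ∈ Set.Icc (0:ℝ) T, ∀ (s : ℝ) (i : Fin d),
      (v t (X t s) i = ∑ j, b t (X t s) j * pd j (fun y => b t y i) (X t s))
      ∧ deriv (fun τ => b τ (X t s) i) t
          + ∑ j, v t (X t s) j * pd j (fun y => b t y i) (X t s)
          - ∑ j, b t (X t s) j * pd j (fun y => v t y i) (X t s) = 0 := by
  intro t ht s i
  have hXi : ∀ j, ContDiff ℝ 2 (fun p : ℝ × ℝ => X p.1 p.2 j) := fun j =>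
    (contDiff_pi.1 hX j).of_le (WithTop.coe_le_coe.2 le_top)
  have hbi : Differentiable ℝ (fun p : ℝ × (Fin d → ℝ) => b p.1 p.2 i) :=
    (contDiff_pi.1 hb i).differentiable (by simp)
  have hvi : Differentiable ℝ (fun p : ℝ × (Fin d → ℝ) => v p.1 p.2 i) :=
    (contDiff_pi.1 hv i).differentiable (by simp)
  have hX_s : ∀ σ, HasDerivAt (fun σ' => X t σ') (b t (X t σ)) σ := fun σ =>
    hasDerivAt_pi.2 fun j => by
      rw [← hbX t ht σ j]
      exact (((hXi j).differentiable (by simp) _).comp σ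
        (differentiableAt_const t |>.prodMk differentiableAt_id)).hasDerivAt
  have hX_t : HasDerivAt (fun τ => X τ s) (v t (X t s)) t :=
    hasDerivAt_pi.2 fun j => by
      rw [← hvX t ht s j]
      exact (((hXi j).differentiable (by simp) _).comp t
        (differentiableAt_id.prodMk (differentiableAt_const s))).hasDerivAt
  have hb_s : HasDerivAt (fun σ => b t (X t σ) i)
      (∑ j, b t (X t s) j * pd j (fun y => b t y i) (X t s)) s :=
    hasDerivAt_comp_sum_pd ((hbi _).comp _ (hasFDerivAt_prodMk_right t _).differentiableAt)
      (hX_s s)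
  have hv_s : HasDerivAt (fun σ => v t (X t σ) i)
      (∑ j, b t (X t s) j * pd j (fun y => v t y i) (X t s)) s :=
    hasDerivAt_comp_sum_pd ((hvi _).comp _ (hasFDerivAt_prodMk_right t _).differentiableAt)
      (hX_s s)
  have hb_t := hasDerivAt_comp_prodMk_sum_pd (hbi _) hX_t
  have hX_ts := (hXi i).hasDerivAt_deriv_deriv_swap t s
  refine ⟨?_, ?_⟩
  · calc v t (X t s) i = deriv (fun τ => X τ s i) t := (hvX t ht s i).symm
      _ = deriv (fun σ => b t (X t σ) i) s := by
          rw [hheat t ht s i, funext fun σ => hbX t ht σ i]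
      _ = _ := hb_s.deriv
  · have h_mixed :
        deriv (fun τ => b τ (X τ s) i) t = deriv (fun τ => deriv (fun σ => X τ σ i) s) t :=
      deriv_eq_of_eqOn_Icc hT ht hb_t.differentiableAt hX_ts.differentiableAt
        fun τ hτ => (hbX τ hτ s i).symm
    rw [hb_t.deriv, hX_ts.deriv, funext fun σ => hvX t ht σ i, hv_s.deriv] at h_mixed
    linarith

end
end
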